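/- Let 𝒩 be a nonempty set, k a field of characteristic 0, K = k((ε)), φ : 𝒩 → k extended additively to words, and T the K-valued mould with T^∅ = 1 and T^{n₁⋯n_r}(ε) = 1/((φ(n₁)+ε)⋯(φ(n₁)+⋯+φ(n_r)+rε)). Let (U_-, U_+) be the Birkhoff decomposition of T, let S be the k-valued mould with S^{n̲} := constant term (ε⁰-coefficient) of U_+^{n̲} (so S^∅ = 1 and S is invertible in the mould algebra k^𝒩̲), and define the k-valued mould R̃ := S × I_k × S⁻¹ − (∇_φ S) × S⁻¹. Then R̃^∅ = 0 and, for every nonempty word n̲, R̃^{n̲} = −r(n̲) · (residue of U_-^{n̲}), the residue being the coefficient of ε⁻¹. -/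

import Mathlib

open scoped Classical

/-- Shuffle coefficient: the number of ways the word `n` can be obtained by interleaving
the letters of `a` and `b` while preserving their internal orders. -/
noncomputable def sh {𝒩 : Type*} : List 𝒩 → List 𝒩 → List 𝒩 → ℕ
  | [], b, n => if b = n then 1 else 0
  | a, [], n => if a = n then 1 else 0
  | _ :: _, _ :: _, [] => 0
  | x :: a, y :: b, z :: n =>
      (if x = z then sh a (y :: b) n else 0) + (if y = z then sh (x :: a) b n else 0)

/-- Mould multiplication: `(M × N)^n = ∑_{n = a b} M^a N^b`. -/
noncomputable def mmul {𝒩 A : Type*} [Semiring A] (M N : List 𝒩 → A) : List 𝒩 → A :=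
  fun n => ∑ i ∈ Finset.range (n.length + 1), M (n.take i) * N (n.drop i)

/-- The unit mould `𝟙`. -/
noncomputable def munit {𝒩 A : Type*} [Semiring A] : List 𝒩 → A :=
  fun n => if n = [] then 1 else 0

/-- Membership in `K_- = ε⁻¹ k[ε⁻¹]`: all coefficients of nonnegative powers vanish. -/
def Kminus {k : Type*} [Field k] (f : LaurentSeries k) : Prop :=
  ∀ n : ℤ, 0 ≤ n → f.coeff n = 0

/-- Membership in `K_+ = k[[ε]]`: all coefficients of negative powers vanish. -/
def Kplus {k : Type*} [Field k] (f : LaurentSeries k) : Prop :=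
  ∀ n : ℤ, n < 0 → f.coeff n = 0

/-- Additive extension of `φ : 𝒩 → k` to words: `φ(n₁⋯n_r) = φ(n₁) + ⋯ + φ(n_r)`. -/
def phiw {𝒩 k : Type*} [AddCommMonoid k] (φ : 𝒩 → k) (l : List 𝒩) : k :=
  (l.map φ).sum

/-- The mould `I`: value `1` on words of length `1`, and `0` otherwise. -/
noncomputable def Imould {𝒩 A : Type*} [Semiring A] : List 𝒩 → A :=
  fun n => if n.length = 1 then 1 else 0

/-- The indeterminate `ε` of `K = k((ε))`. -/
noncomputable def eps (k : Type*) [Field k] : LaurentSeries k :=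
  HahnSeries.single (1 : ℤ) (1 : k)

/-- The mould `T`: `T^∅ = 1` and
`T^{n₁⋯n_r}(ε) = 1/((φ(n₁)+ε)(φ(n₁)+φ(n₂)+2ε)⋯(φ(n₁)+⋯+φ(n_r)+rε))`. -/
noncomputable def Tdef {𝒩 k : Type*} [Field k] (φ : 𝒩 → k) (l : List 𝒩) :
    LaurentSeries k :=
  (∏ i ∈ Finset.range l.length,
      ((HahnSeries.C (phiw φ (l.take (i + 1))) : LaurentSeries k) + (i + 1 : ℕ) • eps k))⁻¹

/-!
The weight `ψ(n) = φ(n) + r(n) ε` is additive on words, so `∇_ψ` is a derivation of the mould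
algebra, and `∇_ψ T = T × I` because each factor of `T^{n}` is `ψ` of a prefix of `n`.
For `W = ∇_ψ U₋ × U₋⁻¹` this gives `W × U₊ = ∇_ψ U₊ − U₊ × I`, hence
`W = (∇_ψ U₊ − U₊ × I) × U₊⁻¹` has coefficients in `K₊`, while computed from `U₋` its constant
term is `r(n) · res U₋^{n}`. Taking constant terms in `W × U₊ = ∇_ψ U₊ − U₊ × I` yields
`w × S = ∇_φ S − S × I`, i.e. `w = −R̃`.
-/

section LaurentSeries

variable {k : Type*} [Field k]

theorem kminus_iff_support_subset {f : LaurentSeries k} : Kminus f ↔ f.support ⊆ Set.Iio 0 := by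
  simp only [Kminus, Set.subset_def, HahnSeries.mem_support, Set.mem_Iio]
  exact forall_congr' fun n => by rw [← not_le, not_imp_not]

theorem kplus_iff_support_subset {f : LaurentSeries k} : Kplus f ↔ f.support ⊆ Set.Ici 0 := by
  simp only [Kplus, Set.subset_def, HahnSeries.mem_support, Set.mem_Ici]
  exact forall_congr' fun n => by rw [← not_lt, not_imp_not]

variable (k) in
def kMinusSubring : NonUnitalSubring (LaurentSeries k) where
  carrier := {f | Kminus f}
  zero_mem' _ _ := HahnSeries.coeff_zero
  add_mem' hf hg n hn := by rw [HahnSeries.coeff_add, hf n hn, hg n hn, add_zero]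
  neg_mem' hf n hn := by rw [HahnSeries.coeff_neg, hf n hn, neg_zero]
  mul_mem' {f g} (hf : Kminus f) (hg : Kminus g) := by
    rw [kminus_iff_support_subset] at hf hg
    show Kminus (f * g)
    rw [kminus_iff_support_subset]
    exact HahnSeries.support_mul_subset.trans <| (Set.add_subset_add hf hg).trans <|
      (Set.add_subset_add_left Set.Iio_subset_Iic_self).trans (Set.Iio_add_Iic_subset 0 0)

variable (k) in
def kPlusSubring : Subring (LaurentSeries k) where
  carrier := {f | Kplus f}
  zero_mem' _ _ := HahnSeries.coeff_zero
  one_mem' n hn := by rw [HahnSeries.coeff_one, if_neg hn.ne]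
  add_mem' hf hg n hn := by rw [HahnSeries.coeff_add, hf n hn, hg n hn, add_zero]
  neg_mem' hf n hn := by rw [HahnSeries.coeff_neg, hf n hn, neg_zero]
  mul_mem' {f g} (hf : Kplus f) (hg : Kplus g) := by
    rw [kplus_iff_support_subset] at hf hg
    show Kplus (f * g)
    rw [kplus_iff_support_subset]
    exact HahnSeries.support_mul_subset.trans <| (Set.add_subset_add hf hg).trans <|
      Set.Ici_add_Ici_subset 0 0

theorem single_mem_kPlusSubring {n : ℤ} (hn : 0 ≤ n) (a : k) :
    HahnSeries.single n a ∈ kPlusSubring k :=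
  fun _ hm => HahnSeries.coeff_single_of_ne (by omega)

theorem coeff_zero_mul_of_kplus {f g : LaurentSeries k} (hf : Kplus f) (hg : Kplus g) :
    (f * g).coeff 0 = f.coeff 0 * g.coeff 0 := by
  rw [HahnSeries.coeff_mul, Finset.sum_eq_single (0, 0)]
  · rintro ⟨i, j⟩ hij hne
    rw [Finset.mem_antidiagonal, HahnSeries.mem_support, HahnSeries.mem_support] at hij
    obtain ⟨hi, hj, hsum⟩ := hij
    rcases lt_trichotomy i 0 with h | h | h
    · exact absurd (hf i h) hi
    · subst h; simp_all
    · exact absurd (hg j (by simp at hsum; omega)) hj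
  · intro h0
    rw [Finset.mem_antidiagonal, HahnSeries.mem_support, HahnSeries.mem_support] at h0
    by_cases hf0 : f.coeff 0 = 0
    · rw [hf0, zero_mul]
    · rw [not_and, not_and] at h0
      rw [not_not.mp fun h => h0 hf0 h (add_zero 0), mul_zero]

theorem nsmul_eps (m : ℕ) : m • eps k = HahnSeries.single 1 (m : k) := by
  have h := map_nsmul (HahnSeries.single.addMonoidHom (1 : ℤ) : k →+ LaurentSeries k) m 1
  rw [nsmul_one] at h
  exact h.symm

theorem coeff_C_add_nsmul_eps_mul (a : k) (m : ℕ) (f : LaurentSeries k) (n : ℤ) :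
    ((HahnSeries.C a + m • eps k) * f).coeff n = a * f.coeff n + m * f.coeff (n - 1) := by
  rw [add_mul, HahnSeries.coeff_add, HahnSeries.C_mul_eq_smul, HahnSeries.coeff_smul,
    nsmul_eps, HahnSeries.coeff_single_mul, smul_eq_mul]

theorem coeff_zero_mul_eq_zero_of_kminus {f g : LaurentSeries k} (hf : f.support ⊆ Set.Iic 0)
    (hg : Kminus g) : (f * g).coeff 0 = 0 := by
  rw [kminus_iff_support_subset] at hg
  have hfg : (f * g).support ⊆ Set.Iio 0 := HahnSeries.support_mul_subset.trans <|
    (Set.add_subset_add hf hg).trans (Set.Iic_add_Iio_subset 0 0)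
  by_contra h
  exact lt_irrefl (0 : ℤ) (hfg ((HahnSeries.mem_support _ _).mpr h))

end LaurentSeries

section Mould

open Finset

variable {𝒩 A : Type*}

section Semiring

variable [Semiring A]

theorem munit_mmul (M : List 𝒩 → A) : mmul munit M = M := by
  funext n
  rw [mmul, sum_eq_single 0 (fun i hi hi0 => ?_) (by simp)]
  · simp [munit]
  · have : n.take i ≠ [] := by rw [Ne, List.take_eq_nil_iff]; rintro (rfl | rfl) <;> simp_all
    simp [munit, this]

theorem mmul_munit (M : List 𝒩 → A) : mmul M munit = M := by
  funext n
  rw [mmul, sum_eq_single n.length (fun i hi hin => ?_) (by simp)]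
  · simp [munit]
  · have : n.drop i ≠ [] := by simp_all; omega
    simp [munit, this]

theorem mmul_assoc (M N P : List 𝒩 → A) : mmul (mmul M N) P = mmul M (mmul N P) := by
  funext n
  let F : ℕ → ℕ → A := fun i j => M (n.take i) * N ((n.take j).drop i) * P (n.drop j)
  have lhs : mmul (mmul M N) P n = ∑ j ∈ range (n.length + 1), ∑ i ∈ range (j + 1), F i j := by
    refine sum_congr rfl fun j hj => ?_
    rw [mmul, sum_mul, List.length_take, min_eq_left (by simp at hj; omega)]
    refine sum_congr rfl fun i hi => ?_
    rw [List.take_take, min_eq_left (by simp at hi; omega)]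
  have rhs : mmul M (mmul N P) n
      = ∑ i ∈ range (n.length + 1), ∑ j ∈ Ico i (n.length + 1), F i j := by
    refine sum_congr rfl fun i hi => ?_
    rw [mmul, mul_sum, sum_Ico_eq_sum_range, List.length_drop,
      show n.length + 1 - i = n.length - i + 1 by simp at hi; omega]
    refine sum_congr rfl fun j _ => ?_
    simp only [F]
    rw [List.drop_take, Nat.add_sub_cancel_left, List.drop_drop, mul_assoc]
  rw [lhs, rhs]
  exact sum_comm' fun j i => by simp only [mem_range, mem_Ico]; omega

theorem mmul_mem {S : Type*} [SetLike S A] [NonUnitalSubsemiringClass S A] {B : S}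
    {M N : List 𝒩 → A} (hM : ∀ n, M n ∈ B) (hN : ∀ n, N n ∈ B) (n : List 𝒩) :
    mmul M N n ∈ B :=
  sum_mem fun _ _ => mul_mem (hM _) (hN _)

end Semiring

section Ring

variable [Ring A]

theorem sub_mmul (M N P : List 𝒩 → A) : mmul (M - N) P = mmul M P - mmul N P := by
  funext n
  simp only [mmul, Pi.sub_apply, sub_mul, sum_sub_distrib]

noncomputable def mouldInv (M : List 𝒩 → A) : List 𝒩 → A
  | [] => 1
  | x :: t => -∑ i ∈ range (t.length + 1), M ((x :: t).take (i + 1)) * mouldInv M (t.drop i)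
termination_by n => n.length
decreasing_by simp only [List.length_cons, List.length_drop]; omega

variable (M : List 𝒩 → A)

theorem mouldInv_nil : mouldInv M [] = 1 := by
  rw [mouldInv]

theorem mouldInv_cons (x : 𝒩) (t : List 𝒩) : mouldInv M (x :: t)
    = -∑ i ∈ range (t.length + 1), M ((x :: t).take (i + 1)) * mouldInv M (t.drop i) := by
  rw [mouldInv]

theorem mmul_mouldInv (hM : M [] = 1) : mmul M (mouldInv M) = munit := by
  funext n
  cases n with
  | nil => simp [mmul, munit, mouldInv_nil, hM]
  | cons x t =>
    rw [mmul, List.length_cons, sum_range_succ', List.take_zero, List.drop_zero, hM, one_mul,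
      mouldInv_cons]
    simp [munit]

/-- Right inverses are two-sided, because `mouldInv M` has itself a right inverse. -/
theorem mouldInv_mmul (hM : M [] = 1) : mmul (mouldInv M) M = munit := by
  have hinv : mmul (mouldInv M) (mouldInv (mouldInv M)) = munit :=
    mmul_mouldInv _ (mouldInv_nil M)
  have hM' : M = mouldInv (mouldInv M) := by
    rw [← munit_mmul (mouldInv (mouldInv M)), ← mmul_mouldInv M hM, mmul_assoc, hinv, mmul_munit]
  calc mmul (mouldInv M) M = mmul (mouldInv M) (mouldInv (mouldInv M)) := congrArg _ hM'
    _ = munit := hinv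

theorem mouldInv_mem {S : Type*} [SetLike S A] [NonUnitalSubringClass S A] {I : S}
    (hM : ∀ n, n ≠ [] → M n ∈ I) : ∀ n, n ≠ [] → mouldInv M n ∈ I
  | [], h => absurd rfl h
  | x :: t, _ => by
    rw [mouldInv_cons]
    refine neg_mem (sum_mem fun i _ => ?_)
    have hx : M ((x :: t).take (i + 1)) ∈ I := hM _ (by simp)
    by_cases ht : t.drop i = []
    · rwa [ht, mouldInv_nil, mul_one]
    · exact mul_mem hx (mouldInv_mem hM _ ht)
termination_by n => n.length
decreasing_by simp only [List.length_cons, List.length_drop]; omega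

end Ring

section CommRing

variable [CommRing A]

def nabla (ψ M : List 𝒩 → A) : List 𝒩 → A := fun n => ψ n * M n

theorem nabla_mmul {ψ : List 𝒩 → A} (hψ : ∀ a b, ψ (a ++ b) = ψ a + ψ b)
    (M N : List 𝒩 → A) : nabla ψ (mmul M N) = mmul (nabla ψ M) N + mmul M (nabla ψ N) := by
  funext n
  simp only [nabla, mmul, Pi.add_apply, mul_sum, ← sum_add_distrib]
  refine sum_congr rfl fun i _ => ?_
  have hsplit := hψ (n.take i) (n.drop i)
  rw [List.take_append_drop] at hsplit
  rw [hsplit]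
  ring

noncomputable def mouldLogDeriv (ψ M : List 𝒩 → A) : List 𝒩 → A := mmul (nabla ψ M) (mouldInv M)

theorem mmul_mouldLogDeriv {ψ : List 𝒩 → A} (hψ : ∀ a b, ψ (a ++ b) = ψ a + ψ b)
    {M T N J : List 𝒩 → A} (hM : M [] = 1) (hT : nabla ψ T = mmul T J) (hMT : mmul M T = N) :
    mmul (mouldLogDeriv ψ M) N = nabla ψ N - mmul N J := by
  have hLeibniz : nabla ψ N = mmul (nabla ψ M) T + mmul N J := by
    rw [← hMT, nabla_mmul hψ, hT, mmul_assoc]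
  calc mmul (mouldLogDeriv ψ M) N = mmul (nabla ψ M) T := by
        rw [mouldLogDeriv, ← hMT, mmul_assoc, ← mmul_assoc (mouldInv M), mouldInv_mmul M hM,
          munit_mmul]
    _ = nabla ψ N - mmul N J := by rw [hLeibniz, add_sub_cancel_right]

end CommRing

end Mould

section Birkhoff

open Finset

variable {𝒩 k : Type*} [Field k]

theorem coeff_zero_mmul {M N : List 𝒩 → LaurentSeries k} (hM : ∀ n, Kplus (M n))
    (hN : ∀ n, Kplus (N n)) (n : List 𝒩) :
    (mmul M N n).coeff 0 = mmul (fun m => (M m).coeff 0) (fun m => (N m).coeff 0) n := by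
  simp only [mmul, HahnSeries.coeff_sum, coeff_zero_mul_of_kplus (hM _) (hN _)]

noncomputable def epsWeight (φ : 𝒩 → k) (n : List 𝒩) : LaurentSeries k :=
  HahnSeries.C (phiw φ n) + n.length • eps k

variable (φ : 𝒩 → k)

theorem epsWeight_nil : epsWeight φ [] = 0 := by
  simp [epsWeight, phiw]

theorem epsWeight_append (a b : List 𝒩) :
    epsWeight φ (a ++ b) = epsWeight φ a + epsWeight φ b := by
  simp only [epsWeight, phiw, List.map_append, List.sum_append, map_add, List.length_append,
    add_nsmul]
  abel

theorem epsWeight_mem_kPlusSubring (n : List 𝒩) : epsWeight φ n ∈ kPlusSubring k := by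
  rw [epsWeight, HahnSeries.C_apply, nsmul_eps]
  exact add_mem (single_mem_kPlusSubring le_rfl _) (single_mem_kPlusSubring zero_le_one _)

theorem epsWeight_ne_zero [CharZero k] {n : List 𝒩} (hn : n ≠ []) : epsWeight φ n ≠ 0 := by
  rw [epsWeight, HahnSeries.C_apply, nsmul_eps]
  intro h
  have h1 := congrArg (fun f => f.coeff 1) h
  simp [hn] at h1

theorem Tdef_append_singleton (a : List 𝒩) (x : 𝒩) :
    Tdef φ (a ++ [x]) = Tdef φ a * (epsWeight φ (a ++ [x]))⁻¹ := by
  rw [Tdef, Tdef, List.length_append, List.length_singleton, prod_range_succ, mul_inv]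
  congr 2
  · refine prod_congr rfl fun i hi => ?_
    rw [List.take_append_of_le_length (by simp at hi; omega)]
  · rw [epsWeight, List.take_of_length_le (by simp), List.length_append, List.length_singleton]

theorem nabla_epsWeight_Tdef [CharZero k] :
    nabla (epsWeight φ) (Tdef φ) = mmul (Tdef φ) Imould := by
  funext n
  induction n using List.reverseRecOn with
  | nil => simp [nabla, epsWeight_nil, mmul, Imould]
  | append_singleton a x _ =>
    have hw := epsWeight_ne_zero φ (List.append_ne_nil_of_right_ne_nil a (List.cons_ne_nil x []))
    rw [nabla, Tdef_append_singleton, mul_left_comm, mul_inv_cancel₀ hw, mul_one, mmul,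
      sum_eq_single a.length (fun i _ hi => ?_) (by simp)]
    · simp [Imould]
    · simp only [Imould, List.length_drop, List.length_append, List.length_singleton]
      rw [if_neg (by omega), mul_zero]

theorem Imould_mem_kPlusSubring (n : List 𝒩) :
    (Imould n : LaurentSeries k) ∈ kPlusSubring k := by
  unfold Imould
  split
  · exact one_mem _
  · exact zero_mem _

variable {φ} {Um Up : List 𝒩 → LaurentSeries k}

theorem support_nabla_epsWeight_subset (hUm : ∀ n : List 𝒩, n ≠ [] → Kminus (Um n))
    (n : List 𝒩) : (nabla (epsWeight φ) Um n).support ⊆ Set.Iic 0 := by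
  rcases eq_or_ne n [] with rfl | hn
  · simp [nabla, epsWeight_nil]
  · intro j hj
    rw [HahnSeries.mem_support, nabla, epsWeight, coeff_C_add_nsmul_eps_mul] at hj
    by_contra hpos
    rw [Set.mem_Iic, not_le] at hpos
    rw [hUm n hn j hpos.le, hUm n hn (j - 1) (by omega), mul_zero, mul_zero, add_zero] at hj
    exact hj rfl

/-- Only the term with `U₋⁻¹(∅) = 1` reaches the constant coefficient: all others lie in `K_-`. -/
theorem coeff_zero_mouldLogDeriv (hUm : ∀ n : List 𝒩, n ≠ [] → Kminus (Um n))
    (n : List 𝒩) :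
    (mouldLogDeriv (epsWeight φ) Um n).coeff 0 = n.length * (Um n).coeff (-1) := by
  have hinv := mouldInv_mem (I := kMinusSubring k) Um hUm
  rw [mouldLogDeriv, mmul, sum_range_succ, HahnSeries.coeff_add, HahnSeries.coeff_sum,
    sum_eq_zero fun i hi => coeff_zero_mul_eq_zero_of_kminus
      (support_nabla_epsWeight_subset hUm _) (hinv _ (by simp at hi ⊢; omega)),
    zero_add, List.take_length, List.drop_length, mouldInv_nil, mul_one, nabla, epsWeight,
    coeff_C_add_nsmul_eps_mul]
  rcases eq_or_ne n [] with rfl | hn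
  · simp [phiw]
  · rw [hUm n hn 0 le_rfl, mul_zero, zero_add, zero_sub]

variable [CharZero k]

theorem kplus_mouldLogDeriv (hUm0 : Um [] = 1) (hUp0 : Up [] = 1)
    (hUp : ∀ n : List 𝒩, Kplus (Up n)) (hEq : mmul Um (Tdef φ) = Up) (n : List 𝒩) :
    Kplus (mouldLogDeriv (epsWeight φ) Um n) := by
  have hW := mmul_mouldLogDeriv (epsWeight_append φ) hUm0 (nabla_epsWeight_Tdef φ) hEq
  have hinv : ∀ m, mouldInv Up m ∈ kPlusSubring k := fun m => by
    rcases eq_or_ne m [] with rfl | hm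
    · rw [mouldInv_nil]; exact one_mem _
    · exact mouldInv_mem Up (fun m _ => hUp m) m hm
  rw [← mmul_munit (mouldLogDeriv _ Um), ← mmul_mouldInv Up hUp0, ← mmul_assoc, hW]
  exact mmul_mem (fun m => sub_mem (mul_mem (epsWeight_mem_kPlusSubring φ m) (hUp m))
    (mmul_mem hUp Imould_mem_kPlusSubring m)) hinv n

theorem mmul_coeff_zero_mouldLogDeriv (hUm0 : Um [] = 1) (hUp0 : Up [] = 1)
    (hUp : ∀ n : List 𝒩, Kplus (Up n)) (hEq : mmul Um (Tdef φ) = Up) :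
    mmul (fun n => (mouldLogDeriv (epsWeight φ) Um n).coeff 0) (fun n => (Up n).coeff 0)
      = nabla (phiw φ) (fun n => (Up n).coeff 0) - mmul (fun n => (Up n).coeff 0) Imould := by
  funext n
  have h := congrArg (fun F => (F n).coeff 0)
    (mmul_mouldLogDeriv (epsWeight_append φ) hUm0 (nabla_epsWeight_Tdef φ) hEq)
  simp only [Pi.sub_apply, HahnSeries.coeff_sub] at h
  rw [coeff_zero_mmul (kplus_mouldLogDeriv hUm0 hUp0 hUp hEq) hUp,
    coeff_zero_mmul hUp Imould_mem_kPlusSubring, nabla, epsWeight, coeff_C_add_nsmul_eps_mul,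
    hUp n (0 - 1) (by norm_num), mul_zero, add_zero] at h
  rw [h]
  congr 2
  funext m
  unfold Imould
  split <;> simp

end Birkhoff

theorem Rtilde_eq_residue_general
    {𝒩 k : Type*} [Field k] [CharZero k] (φ : 𝒩 → k)
    (Um Up : List 𝒩 → LaurentSeries k)
    (hUm0 : Um [] = 1) (hUp0 : Up [] = 1)
    (hUm : ∀ n : List 𝒩, n ≠ [] → Kminus (Um n))
    (hUp : ∀ n : List 𝒩, Kplus (Up n))
    (hEq : mmul Um (Tdef φ) = Up)
    (S : List 𝒩 → k) (hS : S = fun n => (Up n).coeff 0)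
    (Sinv : List 𝒩 → k)
    (hSinv : mmul S Sinv = munit ∧ mmul Sinv S = munit)
    (Rt : List 𝒩 → k)
    (hRt : Rt = fun n =>
      mmul (mmul S Imould) Sinv n - mmul (fun m => phiw φ m * S m) Sinv n) :
    Rt [] = 0 ∧
    ∀ n : List 𝒩, n ≠ [] → Rt n = -(n.length : k) * (Um n).coeff (-1) := by
  set w := fun n => (mouldLogDeriv (epsWeight φ) Um n).coeff 0
  have hwS : mmul w S = nabla (phiw φ) S - mmul S Imould := by
    subst hS
    exact mmul_coeff_zero_mouldLogDeriv hUm0 hUp0 hUp hEq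
  have hw : w = mmul (nabla (phiw φ) S - mmul S Imould) Sinv := by
    rw [← hwS, mmul_assoc, hSinv.1, mmul_munit]
  have hRt_w : ∀ n, Rt n = -(w n) := fun n => by
    rw [hw, sub_mmul, hRt]
    simp only [Pi.sub_apply, neg_sub]
    rfl
  have hRt_res : ∀ n, Rt n = -(n.length : k) * (Um n).coeff (-1) := fun n => by
    rw [hRt_w, neg_mul, ← coeff_zero_mouldLogDeriv (φ := φ) hUm]
  exact ⟨by simpa using hRt_res [], fun n _ => hRt_res n⟩

/-- with `(U₋, U₊)` the Birkhoff decomposition of `T`,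
`S` the mould of constant terms of `U₊` (with inverse `S⁻¹` in the mould algebra) and
`R̃ = S × I × S⁻¹ − (∇_φ S) × S⁻¹`, one has `R̃^∅ = 0` and, for every nonempty word `n`,
`R̃^n = −r(n) · (residue of U₋^n)`. -/
theorem Rtilde_eq_residue
    {𝒩 k : Type*} [Nonempty 𝒩] [Field k] [CharZero k] (φ : 𝒩 → k)
    (Um Up : List 𝒩 → LaurentSeries k)
    (hUm0 : Um [] = 1) (hUp0 : Up [] = 1)
    (hUm : ∀ n : List 𝒩, n ≠ [] → Kminus (Um n))
    (hUp : ∀ n : List 𝒩, Kplus (Up n))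
    (hEq : mmul Um (Tdef φ) = Up)
    (S : List 𝒩 → k) (hS : S = fun n => (Up n).coeff 0)
    (Sinv : List 𝒩 → k)
    (hSinv : mmul S Sinv = munit ∧ mmul Sinv S = munit)
    (Rt : List 𝒩 → k)
    (hRt : Rt = fun n =>
      mmul (mmul S Imould) Sinv n - mmul (fun m => phiw φ m * S m) Sinv n) :
    Rt [] = 0 ∧
    ∀ n : List 𝒩, n ≠ [] → Rt n = -(n.length : k) * (Um n).coeff (-1) :=
  Rtilde_eq_residue_general φ Um Up hUm0 hUp0 hUm hUp hEq S hS Sinv hSinv Rt hRt
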